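/- arXiv:2502.05810 — 2 statements merged into one kernel-verified Lean document; each statement's English description precedes it below -/
import Mathlib

section
/- Let p_ℓ be a root of ϑ(o) + Θ(o) λ_ℓ = 0 with ϑ(o) = τo³ + o² + ω₀ o, Θ(o) = c²(τo+1) + δo, where τ > 0, c > 0, δ ≥ 0, ω₀ ≥ 0 and λ_ℓ → ∞. Then p_ℓ = i((c² + δ/τ)λ_ℓ + ω₀/τ)^{1/2} + O(ω₀^{1/2} λ_ℓ^{-1/4}) + O(δ^{1/2} λ_ℓ^{1/4}) as λ_ℓ → ∞; in particular 1/p_ℓ = O(λ_ℓ^{-1/2}) and p_ℓ² = -(c² + δ/τ)λ_ℓ - (ω₀/τ)(1 + O(λ_ℓ^{-1/2})) + O(δ λ_ℓ^{1/2}). -/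
/-!
Write `z = x + i y` for a root with `y > 0` and `A = (c² + δ/τ) λ + ω₀/τ` (`freqSq`). The
imaginary part of the equation gives `y² = A + x (3x + 2/τ)`; combined with the real part it
gives `x · D = -(δλ + ω₀)/τ` with `D = 2τA + (2/τ)(2τx + 1)² ≥ 2τA` (`reDenom`). Hence
`-1/(2τ) ≤ x ≤ 0`, `c²λ ≤ |z|² ≤ A`, and `x` is `δλ + ω₀` times a quantity of size `O(1/λ)`.
The expansions follow from the exact identities `z = i√A + x (1 + i (3x + 2/τ)/(y + √A))` and
`z² = -A - 2x (z̄ + 1/τ)`, splitting `x` into its `ω₀`-part and its `δ`-part.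
-/

open Filter Asymptotics Complex
open scoped ComplexConjugate

noncomputable section

/-- `ϑ(z) + Θ(z) l`. -/
def jmgtSymbol (τ c δ ω₀ l : ℝ) (z : ℂ) : ℂ :=
  (τ : ℂ) * z ^ 3 + z ^ 2 + (ω₀ : ℂ) * z
    + (((c ^ 2 : ℝ) : ℂ) * ((τ : ℂ) * z + 1) + (δ : ℂ) * z) * (l : ℂ)

def freqSq (τ c δ ω₀ l : ℝ) : ℝ := (c ^ 2 + δ / τ) * l + ω₀ / τ

def reDenom (τ c δ ω₀ l : ℝ) (z : ℂ) : ℝ :=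
  2 * τ * freqSq τ c δ ω₀ l + 2 / τ * (2 * τ * z.re + 1) ^ 2

def poleCorrection (τ c δ ω₀ l : ℝ) (z : ℂ) : ℂ :=
  -(1 + ((3 * z.re + 2 / τ) / (z.im + √(freqSq τ c δ ω₀ l)) : ℝ) * I)
    / ((τ * reDenom τ c δ ω₀ l z : ℝ) : ℂ)

def poleSqCorrection (τ c δ ω₀ l : ℝ) (z : ℂ) : ℂ :=
  (conj z + ((1 / τ : ℝ) : ℂ)) / ((τ * reDenom τ c δ ω₀ l z : ℝ) : ℂ)

structure JMGTParams (τ c δ ω₀ : ℝ) : Prop where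
  τ_pos : 0 < τ
  c_pos : 0 < c
  δ_nonneg : 0 ≤ δ
  ω₀_nonneg : 0 ≤ ω₀

end

section Root

variable {τ c δ ω₀ l : ℝ} {z : ℂ}

lemma sq_mul_le_freqSq (hτ : 0 < τ) (hδ : 0 ≤ δ) (hω₀ : 0 ≤ ω₀) (hl : 0 ≤ l) :
    c ^ 2 * l ≤ freqSq τ c δ ω₀ l := by
  unfold freqSq
  have : 0 ≤ δ / τ * l := by positivity
  have : 0 ≤ ω₀ / τ := by positivity
  nlinarith

lemma add_le_mul_freqSq (hτ : 0 < τ) (hl : 0 ≤ l) : δ * l + ω₀ ≤ τ * freqSq τ c δ ω₀ l := by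
  have hA : τ * freqSq τ c δ ω₀ l = τ * c ^ 2 * l + (δ * l + ω₀) := by
    unfold freqSq; field_simp; ring
  rw [hA]
  have : 0 ≤ τ * c ^ 2 * l := by positivity
  linarith

lemma freqSq_pos (hP : JMGTParams τ c δ ω₀) (hl : 0 < l) : 0 < freqSq τ c δ ω₀ l :=
  have := hP.c_pos
  (by positivity : 0 < c ^ 2 * l).trans_le
    (sq_mul_le_freqSq hP.τ_pos hP.δ_nonneg hP.ω₀_nonneg hl.le)

lemma mul_sqrt_le_sqrt_freqSq (hP : JMGTParams τ c δ ω₀) (hl : 0 ≤ l) :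
    c * √l ≤ √(freqSq τ c δ ω₀ l) := by
  have hc := hP.c_pos
  have hA := sq_mul_le_freqSq (c := c) hP.τ_pos hP.δ_nonneg hP.ω₀_nonneg hl
  rw [Real.le_sqrt (by positivity) ((by positivity : 0 ≤ c ^ 2 * l).trans hA), mul_pow,
    Real.sq_sqrt hl]
  exact hA

lemma mul_freqSq_le_reDenom (hτ : 0 < τ) :
    2 * τ * freqSq τ c δ ω₀ l ≤ reDenom τ c δ ω₀ l z := by
  unfold reDenom
  have : 0 ≤ 2 / τ * (2 * τ * z.re + 1) ^ 2 := by positivity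
  linarith

lemma two_mul_sq_mul_freqSq_le (hτ : 0 < τ) :
    2 * τ ^ 2 * freqSq τ c δ ω₀ l ≤ τ * reDenom τ c δ ω₀ l z :=
  calc 2 * τ ^ 2 * freqSq τ c δ ω₀ l = τ * (2 * τ * freqSq τ c δ ω₀ l) := by ring
    _ ≤ τ * reDenom τ c δ ω₀ l z := mul_le_mul_of_nonneg_left (mul_freqSq_le_reDenom hτ) hτ.le

lemma reDenom_pos (hP : JMGTParams τ c δ ω₀) (hl : 0 < l) : 0 < reDenom τ c δ ω₀ l z :=
  have := hP.τ_pos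
  have := freqSq_pos hP hl
  (by positivity : 0 < 2 * τ * freqSq τ c δ ω₀ l).trans_le (mul_freqSq_le_reDenom hP.τ_pos)

lemma eqs_of_jmgtSymbol_eq_zero (hz : jmgtSymbol τ c δ ω₀ l z = 0) (hy : z.im ≠ 0) :
    τ * z.im ^ 2 = 3 * τ * z.re ^ 2 + 2 * z.re + ω₀ + (c ^ 2 * τ + δ) * l ∧
    (2 * τ * z.re + 1) * (z.re ^ 2 + z.im ^ 2) = c ^ 2 * l := by
  have hre := congrArg re hz
  have him := congrArg im hz
  simp only [jmgtSymbol, add_re, add_im, mul_re, mul_im, ofReal_re, ofReal_im, one_re, one_im,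
    zero_re, zero_im, pow_succ, pow_zero, one_mul] at hre him
  have him' : τ * (3 * z.re ^ 2 - z.im ^ 2) + 2 * z.re + ω₀ + (c ^ 2 * τ + δ) * l = 0 :=
    (mul_eq_zero.mp (by linear_combination him)).resolve_right hy
  exact ⟨by linear_combination -him', by linear_combination -hre + z.re * him'⟩

lemma im_sq_eq_freqSq_add (hτ : τ ≠ 0) (hz : jmgtSymbol τ c δ ω₀ l z = 0) (hy : z.im ≠ 0) :
    z.im ^ 2 = freqSq τ c δ ω₀ l + z.re * (3 * z.re + 2 / τ) := by
  unfold freqSq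
  field_simp
  linear_combination (eqs_of_jmgtSymbol_eq_zero hz hy).1

lemma re_mul_reDenom (hτ : τ ≠ 0) (hz : jmgtSymbol τ c δ ω₀ l z = 0) (hy : z.im ≠ 0) :
    z.re * reDenom τ c δ ω₀ l z = -(δ * l + ω₀) / τ := by
  obtain ⟨him, hre⟩ := eqs_of_jmgtSymbol_eq_zero hz hy
  unfold reDenom freqSq
  field_simp
  linear_combination (-(2 * τ * z.re + 1)) * him + τ * hre

lemma re_eq_neg_div (hP : JMGTParams τ c δ ω₀) (hl : 0 < l) (hz : jmgtSymbol τ c δ ω₀ l z = 0)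
    (hy : 0 < z.im) : z.re = -(δ * l + ω₀) / (τ * reDenom τ c δ ω₀ l z) := by
  rw [← div_div, ← re_mul_reDenom hP.τ_pos.ne' hz hy.ne',
    mul_div_cancel_right₀ _ (reDenom_pos hP hl).ne']

lemma re_nonpos (hP : JMGTParams τ c δ ω₀) (hl : 0 < l) (hz : jmgtSymbol τ c δ ω₀ l z = 0)
    (hy : 0 < z.im) : z.re ≤ 0 := by
  rw [re_eq_neg_div hP hl hz hy]
  have := reDenom_pos (z := z) hP hl
  obtain ⟨hτ, -, hδ, hω₀⟩ := hP
  exact div_nonpos_of_nonpos_of_nonneg (neg_nonpos.mpr (by positivity)) (by positivity)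

lemma neg_one_le_two_mul_mul_re (hP : JMGTParams τ c δ ω₀) (hl : 0 < l)
    (hz : jmgtSymbol τ c δ ω₀ l z = 0) (hy : 0 < z.im) : -1 ≤ 2 * τ * z.re := by
  have hτ := hP.τ_pos
  have hA := freqSq_pos hP hl
  have hxD := re_mul_reDenom hτ.ne' hz hy.ne'
  have hN : (δ * l + ω₀) / τ ≤ freqSq τ c δ ω₀ l :=
    (div_le_iff₀' hτ).mpr (add_le_mul_freqSq hτ hl.le)
  have hD : z.re * reDenom τ c δ ω₀ l z ≤ z.re * (2 * τ * freqSq τ c δ ω₀ l) :=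
    mul_le_mul_of_nonpos_left (mul_freqSq_le_reDenom hτ) (re_nonpos hP hl hz hy)
  rw [neg_div] at hxD
  nlinarith

lemma sq_mul_le_sq_norm (hP : JMGTParams τ c δ ω₀) (hl : 0 < l)
    (hz : jmgtSymbol τ c δ ω₀ l z = 0) (hy : 0 < z.im) : c ^ 2 * l ≤ ‖z‖ ^ 2 := by
  have hre := (eqs_of_jmgtSymbol_eq_zero hz hy.ne').2
  have hx := re_nonpos hP hl hz hy
  rw [Complex.sq_norm, normSq_apply]
  nlinarith [sq_nonneg z.re, sq_nonneg z.im, mul_nonpos_of_nonneg_of_nonpos hP.τ_pos.le hx]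

lemma mul_sqrt_le_norm (hP : JMGTParams τ c δ ω₀) (hl : 0 < l)
    (hz : jmgtSymbol τ c δ ω₀ l z = 0) (hy : 0 < z.im) : c * √l ≤ ‖z‖ := by
  have hc := hP.c_pos
  rw [← pow_le_pow_iff_left₀ (by positivity) (norm_nonneg z) two_ne_zero, mul_pow,
    Real.sq_sqrt hl.le]
  exact sq_mul_le_sq_norm hP hl hz hy

lemma norm_inv_le (hP : JMGTParams τ c δ ω₀) (hl : 0 < l) (hz : jmgtSymbol τ c δ ω₀ l z = 0)
    (hy : 0 < z.im) : ‖z⁻¹‖ ≤ c⁻¹ * (√l)⁻¹ := by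
  have hc := hP.c_pos
  rw [norm_inv, ← mul_inv]
  exact inv_anti₀ (by positivity) (mul_sqrt_le_norm hP hl hz hy)

lemma norm_le_sqrt_freqSq (hP : JMGTParams τ c δ ω₀) (hl : 0 < l)
    (hz : jmgtSymbol τ c δ ω₀ l z = 0) (hy : 0 < z.im) : ‖z‖ ≤ √(freqSq τ c δ ω₀ l) := by
  have hτ := hP.τ_pos
  have hsq : ‖z‖ ^ 2 = freqSq τ c δ ω₀ l + 2 / τ * (z.re * (2 * τ * z.re + 1)) := by
    rw [Complex.sq_norm, normSq_apply, ← sq, ← sq, im_sq_eq_freqSq_add hτ.ne' hz hy.ne']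
    field_simp
    ring
  have hx : z.re * (2 * τ * z.re + 1) ≤ 0 :=
    mul_nonpos_of_nonpos_of_nonneg (re_nonpos hP hl hz hy)
      (by linarith [neg_one_le_two_mul_mul_re hP hl hz hy])
  rw [Real.le_sqrt (norm_nonneg z) (freqSq_pos hP hl).le, hsq]
  nlinarith [div_pos two_pos hτ]

lemma eq_I_mul_sqrt_add_mul_poleCorrection (hP : JMGTParams τ c δ ω₀) (hl : 0 < l)
    (hz : jmgtSymbol τ c δ ω₀ l z = 0) (hy : 0 < z.im) :
    z = I * (√(freqSq τ c δ ω₀ l) : ℂ) + ((δ * l + ω₀ : ℝ) : ℂ) * poleCorrection τ c δ ω₀ l z := by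
  have hτ := hP.τ_pos
  set s := √(freqSq τ c δ ω₀ l)
  set q := (3 * z.re + 2 / τ) / (z.im + s)
  have hs : s ^ 2 = freqSq τ c δ ω₀ l := Real.sq_sqrt (freqSq_pos hP hl).le
  have hys : 0 < z.im + s := add_pos_of_pos_of_nonneg hy (Real.sqrt_nonneg _)
  have him : z.im = s + z.re * q := by
    have : z.im - s = z.re * q := by
      rw [mul_div_assoc', eq_div_iff hys.ne']
      linear_combination im_sq_eq_freqSq_add hτ.ne' hz hy.ne' - hs
    linarith
  have hcorr : ((δ * l + ω₀ : ℝ) : ℂ) * poleCorrection τ c δ ω₀ l z = z.re * (1 + q * I) := by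
    have hT : (τ * reDenom τ c δ ω₀ l z : ℂ) ≠ 0 := by
      exact_mod_cast (mul_pos hτ (reDenom_pos hP hl)).ne'
    rw [re_eq_neg_div hP hl hz hy, poleCorrection]
    simp only [q, s]
    push_cast
    field_simp
  calc z = z.re + z.im * I := (re_add_im z).symm
    _ = I * s + z.re * (1 + q * I) := by rw [him]; push_cast; ring
    _ = _ := by rw [hcorr]

lemma sq_eq_neg_add_mul_poleSqCorrection (hP : JMGTParams τ c δ ω₀) (hl : 0 < l)
    (hz : jmgtSymbol τ c δ ω₀ l z = 0) (hy : 0 < z.im) :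
    z ^ 2 = -(freqSq τ c δ ω₀ l : ℂ)
      + 2 * ((δ * l + ω₀ : ℝ) : ℂ) * poleSqCorrection τ c δ ω₀ l z := by
  have hτ := hP.τ_pos
  have hcorr : ((δ * l + ω₀ : ℝ) : ℂ) * poleSqCorrection τ c δ ω₀ l z
      = -z.re * (conj z + ((1 / τ : ℝ) : ℂ)) := by
    have hT : (τ * reDenom τ c δ ω₀ l z : ℂ) ≠ 0 := by
      exact_mod_cast (mul_pos hτ (reDenom_pos hP hl)).ne'
    rw [re_eq_neg_div hP hl hz hy, poleSqCorrection]
    push_cast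
    field_simp
  have hconj : conj z = z.re - z.im * I := by apply Complex.ext <;> simp
  have him : (z.im : ℂ) ^ 2 = freqSq τ c δ ω₀ l + z.re * (3 * z.re + 2 / τ) := by
    exact_mod_cast im_sq_eq_freqSq_add hτ.ne' hz hy.ne'
  rw [mul_assoc, hcorr, hconj]
  conv_lhs => rw [← re_add_im z]
  push_cast
  linear_combination (z.im : ℂ) ^ 2 * I_sq - him

lemma norm_poleCorrection_le (hP : JMGTParams τ c δ ω₀) (hl : 1 ≤ l)
    (hz : jmgtSymbol τ c δ ω₀ l z = 0) (hy : 0 < z.im) :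
    ‖poleCorrection τ c δ ω₀ l z‖ ≤ (1 + 2 / (τ * c)) / (2 * τ ^ 2 * c ^ 2) * l⁻¹ := by
  obtain ⟨hτ, hc, hδ, hω₀⟩ := hP
  have hl0 : 0 < l := one_pos.trans_le hl
  set s := √(freqSq τ c δ ω₀ l)
  set T := τ * reDenom τ c δ ω₀ l z
  have hcs : c ≤ s := calc
    c ≤ c * √l := le_mul_of_one_le_right hc.le (Real.one_le_sqrt.mpr hl)
    _ ≤ s := mul_sqrt_le_sqrt_freqSq ⟨hτ, hc, hδ, hω₀⟩ hl0.le
  have hT : 2 * τ ^ 2 * c ^ 2 * l ≤ T := calc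
    2 * τ ^ 2 * c ^ 2 * l = 2 * τ ^ 2 * (c ^ 2 * l) := by ring
    _ ≤ 2 * τ ^ 2 * freqSq τ c δ ω₀ l := by gcongr; exact sq_mul_le_freqSq hτ hδ hω₀ hl0.le
    _ ≤ T := two_mul_sq_mul_freqSq_le hτ
  have hq : |(3 * z.re + 2 / τ) / (z.im + s)| ≤ 2 / (τ * c) := by
    have hx := re_nonpos ⟨hτ, hc, hδ, hω₀⟩ hl0 hz hy
    have hx' := neg_one_le_two_mul_mul_re ⟨hτ, hc, hδ, hω₀⟩ hl0 hz hy
    have hnum : 0 ≤ 3 * z.re + 2 / τ := by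
      rw [show 3 * z.re + 2 / τ = (3 * (τ * z.re) + 2) / τ by field_simp]
      exact div_nonneg (by linarith) hτ.le
    rw [abs_of_nonneg (div_nonneg hnum (by positivity)), ← div_div]
    exact div_le_div₀ (by positivity) (by linarith) hc (by linarith)
  have hnorm : ‖1 + (((3 * z.re + 2 / τ) / (z.im + s) : ℝ) : ℂ) * I‖ ≤ 1 + 2 / (τ * c) := by
    refine (norm_add_le _ _).trans ?_
    rw [norm_one, norm_mul, norm_I, mul_one, norm_real, Real.norm_eq_abs]
    linarith
  calc ‖poleCorrection τ c δ ω₀ l z‖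
      = ‖1 + (((3 * z.re + 2 / τ) / (z.im + s) : ℝ) : ℂ) * I‖ / T := by
        rw [poleCorrection, norm_div, norm_neg, norm_real,
          Real.norm_of_nonneg ((by positivity : 0 ≤ 2 * τ ^ 2 * c ^ 2 * l).trans hT)]
    _ ≤ (1 + 2 / (τ * c)) / (2 * τ ^ 2 * c ^ 2 * l) :=
        div_le_div₀ (by positivity) hnorm (by positivity) hT
    _ = (1 + 2 / (τ * c)) / (2 * τ ^ 2 * c ^ 2) * l⁻¹ := by ring

lemma norm_poleSqCorrection_le (hP : JMGTParams τ c δ ω₀) (hl : 1 ≤ l)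
    (hz : jmgtSymbol τ c δ ω₀ l z = 0) (hy : 0 < z.im) :
    ‖poleSqCorrection τ c δ ω₀ l z‖ ≤ (1 + 1 / (τ * c)) / (2 * τ ^ 2 * c) * (√l)⁻¹ := by
  have hτ := hP.τ_pos
  have hc := hP.c_pos
  have hl0 : 0 < l := one_pos.trans_le hl
  set s := √(freqSq τ c δ ω₀ l)
  set T := τ * reDenom τ c δ ω₀ l z
  have hcs : c * √l ≤ s := mul_sqrt_le_sqrt_freqSq hP hl0.le
  have hc_le : c ≤ c * √l := le_mul_of_one_le_right hc.le (Real.one_le_sqrt.mpr hl)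
  have hT : 2 * τ ^ 2 * s ^ 2 ≤ T := by
    rw [Real.sq_sqrt (freqSq_pos hP hl0).le]
    exact two_mul_sq_mul_freqSq_le hτ
  have hs0 : 0 < s := hc.trans_le (hc_le.trans hcs)
  have hnorm : ‖conj z + ((1 / τ : ℝ) : ℂ)‖ ≤ s + 1 / τ := by
    refine (norm_add_le _ _).trans ?_
    rw [norm_conj, norm_real, Real.norm_of_nonneg (by positivity)]
    gcongr
    exact norm_le_sqrt_freqSq hP hl0 hz hy
  calc ‖poleSqCorrection τ c δ ω₀ l z‖
      = ‖conj z + ((1 / τ : ℝ) : ℂ)‖ / T := by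
        rw [poleSqCorrection, norm_div, norm_real,
          Real.norm_of_nonneg ((by positivity : 0 ≤ 2 * τ ^ 2 * s ^ 2).trans hT)]
    _ ≤ (s + 1 / τ) / (2 * τ ^ 2 * s ^ 2) := div_le_div₀ (by positivity) hnorm (by positivity) hT
    _ = (1 + 1 / (τ * s)) / (2 * τ ^ 2 * s) := by field_simp
    _ ≤ (1 + 1 / (τ * c)) / (2 * τ ^ 2 * (c * √l)) := by gcongr; exact hc_le.trans hcs
    _ = (1 + 1 / (τ * c)) / (2 * τ ^ 2 * c) * (√l)⁻¹ := by field_simp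

end Root

lemma inv_le_rpow_neg_one_div_four {x : ℝ} (hx : 1 ≤ x) : x⁻¹ ≤ x ^ (-(1 : ℝ) / 4) := by
  rw [← Real.rpow_neg_one]
  exact Real.rpow_le_rpow_of_exponent_le hx (by norm_num)

lemma rpow_neg_one_div_two {x : ℝ} (hx : 0 ≤ x) : x ^ (-(1 : ℝ) / 2) = (√x)⁻¹ := by
  rw [neg_div, Real.rpow_neg hx, Real.sqrt_eq_rpow]

section Asymptotics

variable {τ c δ ω₀ : ℝ} {lam : ℕ → ℝ} {p : ℕ → ℂ}

lemma exists_pole_expansion (hP : JMGTParams τ c δ ω₀) (hpos : ∀ ℓ, 0 < lam ℓ)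
    (hlim : Tendsto lam atTop atTop) (hroot : ∀ ℓ, jmgtSymbol τ c δ ω₀ (lam ℓ) (p ℓ) = 0)
    (hbranch : ∀ ℓ, 0 < (p ℓ).im) :
    ∃ e₁ e₂ : ℕ → ℂ,
      (∀ ℓ, p ℓ = I * (√(freqSq τ c δ ω₀ (lam ℓ)) : ℂ) + e₁ ℓ + e₂ ℓ) ∧
      e₁ =O[atTop] (fun ℓ => √ω₀ * lam ℓ ^ (-(1 : ℝ) / 4)) ∧
      e₂ =O[atTop] (fun ℓ => √δ * lam ℓ ^ ((1 : ℝ) / 4)) := by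
  set K := (1 + 2 / (τ * c)) / (2 * τ ^ 2 * c ^ 2)
  have hK : 0 ≤ K := by have := hP.τ_pos; have := hP.c_pos; positivity
  have hcorr : ∀ᶠ ℓ in atTop, 1 ≤ lam ℓ ∧
      ‖poleCorrection τ c δ ω₀ (lam ℓ) (p ℓ)‖ ≤ K * (lam ℓ)⁻¹ := by
    filter_upwards [hlim.eventually_ge_atTop 1] with ℓ hl
    exact ⟨hl, norm_poleCorrection_le hP hl (hroot ℓ) (hbranch ℓ)⟩
  refine ⟨fun ℓ => ω₀ * poleCorrection τ c δ ω₀ (lam ℓ) (p ℓ),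
    fun ℓ => (δ * lam ℓ : ℝ) * poleCorrection τ c δ ω₀ (lam ℓ) (p ℓ), fun ℓ => ?_, ?_, ?_⟩
  · have h := eq_I_mul_sqrt_add_mul_poleCorrection hP (hpos ℓ) (hroot ℓ) (hbranch ℓ)
    push_cast at h ⊢
    linear_combination h
  · refine IsBigO.of_bound (K * √ω₀) ?_
    filter_upwards [hcorr] with ℓ ⟨hl, hC⟩
    have hω₀ := hP.ω₀_nonneg
    rw [norm_mul, norm_real, Real.norm_of_nonneg hω₀,
      Real.norm_of_nonneg (by positivity)]
    calc ω₀ * ‖poleCorrection τ c δ ω₀ (lam ℓ) (p ℓ)‖ ≤ ω₀ * (K * (lam ℓ)⁻¹) := by gcongr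
      _ = K * √ω₀ * (√ω₀ * (lam ℓ)⁻¹) := by
        linear_combination -(K * (lam ℓ)⁻¹) * Real.mul_self_sqrt hω₀
      _ ≤ K * √ω₀ * (√ω₀ * lam ℓ ^ (-(1 : ℝ) / 4)) := by
        gcongr; exact inv_le_rpow_neg_one_div_four hl
  · refine IsBigO.of_bound (K * √δ) ?_
    filter_upwards [hcorr] with ℓ ⟨hl, hC⟩
    have hδ := hP.δ_nonneg
    have hl0 : 0 < lam ℓ := one_pos.trans_le hl
    rw [norm_mul, norm_real, Real.norm_of_nonneg (by positivity),
      Real.norm_of_nonneg (by positivity)]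
    calc δ * lam ℓ * ‖poleCorrection τ c δ ω₀ (lam ℓ) (p ℓ)‖
        ≤ δ * lam ℓ * (K * (lam ℓ)⁻¹) := by gcongr
      _ = K * √δ * (√δ * 1) := by
        field_simp
        rw [Real.sq_sqrt hδ, mul_comm]
      _ ≤ K * √δ * (√δ * lam ℓ ^ ((1 : ℝ) / 4)) := by
        gcongr; exact Real.one_le_rpow hl (by norm_num)

lemma isBigO_one_div_pole (hP : JMGTParams τ c δ ω₀) (hpos : ∀ ℓ, 0 < lam ℓ)
    (hroot : ∀ ℓ, jmgtSymbol τ c δ ω₀ (lam ℓ) (p ℓ) = 0) (hbranch : ∀ ℓ, 0 < (p ℓ).im) :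
    (fun ℓ => 1 / p ℓ) =O[atTop] fun ℓ => lam ℓ ^ (-(1 : ℝ) / 2) := by
  refine IsBigO.of_bound c⁻¹ (Eventually.of_forall fun ℓ => ?_)
  rw [one_div, Real.norm_of_nonneg (Real.rpow_nonneg (hpos ℓ).le _),
    rpow_neg_one_div_two (hpos ℓ).le]
  exact norm_inv_le hP (hpos ℓ) (hroot ℓ) (hbranch ℓ)

lemma exists_pole_sq_expansion (hP : JMGTParams τ c δ ω₀) (hpos : ∀ ℓ, 0 < lam ℓ)
    (hlim : Tendsto lam atTop atTop) (hroot : ∀ ℓ, jmgtSymbol τ c δ ω₀ (lam ℓ) (p ℓ) = 0)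
    (hbranch : ∀ ℓ, 0 < (p ℓ).im) :
    ∃ e₃ e₄ : ℕ → ℂ,
      (∀ ℓ, p ℓ ^ 2 = -(((c ^ 2 + δ / τ) * lam ℓ : ℝ) : ℂ) - ((ω₀ / τ : ℝ) : ℂ) * (1 + e₃ ℓ)
        + e₄ ℓ) ∧
      e₃ =O[atTop] (fun ℓ => lam ℓ ^ (-(1 : ℝ) / 2)) ∧
      e₄ =O[atTop] (fun ℓ => δ * lam ℓ ^ ((1 : ℝ) / 2)) := by
  have hτ := hP.τ_pos
  set K := (1 + 1 / (τ * c)) / (2 * τ ^ 2 * c)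
  have hK : 0 ≤ K := by have := hP.c_pos; positivity
  have hcorr : ∀ᶠ ℓ in atTop, 1 ≤ lam ℓ ∧
      ‖poleSqCorrection τ c δ ω₀ (lam ℓ) (p ℓ)‖ ≤ K * (√(lam ℓ))⁻¹ := by
    filter_upwards [hlim.eventually_ge_atTop 1] with ℓ hl
    exact ⟨hl, norm_poleSqCorrection_le hP hl (hroot ℓ) (hbranch ℓ)⟩
  refine ⟨fun ℓ => -2 * τ * poleSqCorrection τ c δ ω₀ (lam ℓ) (p ℓ),
    fun ℓ => 2 * (δ * lam ℓ : ℝ) * poleSqCorrection τ c δ ω₀ (lam ℓ) (p ℓ), fun ℓ => ?_, ?_, ?_⟩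
  · have h := sq_eq_neg_add_mul_poleSqCorrection hP (hpos ℓ) (hroot ℓ) (hbranch ℓ)
    have hτ' : (τ : ℂ) ≠ 0 := ofReal_ne_zero.mpr hτ.ne'
    unfold freqSq at h
    push_cast at h ⊢
    field_simp at h ⊢
    linear_combination h
  · refine IsBigO.of_bound (2 * τ * K) ?_
    filter_upwards [hcorr] with ℓ ⟨hl, hS⟩
    have hl0 : 0 < lam ℓ := one_pos.trans_le hl
    rw [norm_mul, norm_mul, norm_neg, norm_ofNat, norm_real, Real.norm_of_nonneg hτ.le,
      Real.norm_of_nonneg (Real.rpow_nonneg hl0.le _), rpow_neg_one_div_two hl0.le]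
    calc 2 * τ * ‖poleSqCorrection τ c δ ω₀ (lam ℓ) (p ℓ)‖ ≤ 2 * τ * (K * (√(lam ℓ))⁻¹) := by
          gcongr
      _ = 2 * τ * K * (√(lam ℓ))⁻¹ := by ring
  · refine IsBigO.of_bound (2 * K) ?_
    filter_upwards [hcorr] with ℓ ⟨hl, hS⟩
    have hδ := hP.δ_nonneg
    have hl0 : 0 < lam ℓ := one_pos.trans_le hl
    rw [norm_mul, norm_mul, norm_ofNat, norm_real, Real.norm_of_nonneg (by positivity),
      Real.norm_of_nonneg (by positivity), ← Real.sqrt_eq_rpow]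
    calc 2 * (δ * lam ℓ) * ‖poleSqCorrection τ c δ ω₀ (lam ℓ) (p ℓ)‖
        ≤ 2 * (δ * lam ℓ) * (K * (√(lam ℓ))⁻¹) := by gcongr
      _ = 2 * K * (δ * √(lam ℓ)) := by
        field_simp
        rw [Real.sq_sqrt hl0.le]
        ring

end Asymptotics

theorem stmt3_general (τ c δ ω₀ : ℝ) (hτ : 0 < τ) (hc : 0 < c) (hδ : 0 ≤ δ) (hω₀ : 0 ≤ ω₀)
    (lam : ℕ → ℝ) (hpos : ∀ ℓ, 0 < lam ℓ) (hlim : Tendsto lam atTop atTop)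
    (p : ℕ → ℂ)
    (hroot : ∀ ℓ, (τ : ℂ) * (p ℓ) ^ 3 + (p ℓ) ^ 2 + (ω₀ : ℂ) * p ℓ
        + (((c ^ 2 : ℝ) : ℂ) * ((τ : ℂ) * p ℓ + 1) + (δ : ℂ) * p ℓ) * (lam ℓ : ℂ) = 0)
    (hbranch : ∀ ℓ, 0 < (p ℓ).im) :
    (∃ e₁ e₂ : ℕ → ℂ,
        (∀ ℓ, p ℓ = Complex.I * (Real.sqrt ((c ^ 2 + δ / τ) * lam ℓ + ω₀ / τ) : ℝ)
            + e₁ ℓ + e₂ ℓ) ∧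
        e₁ =O[atTop] (fun ℓ => Real.sqrt ω₀ * (lam ℓ) ^ (-(1 : ℝ) / 4)) ∧
        e₂ =O[atTop] (fun ℓ => Real.sqrt δ * (lam ℓ) ^ ((1 : ℝ) / 4))) ∧
    ((fun ℓ => 1 / p ℓ) =O[atTop] fun ℓ => (lam ℓ) ^ (-(1 : ℝ) / 2)) ∧
    (∃ e₃ e₄ : ℕ → ℂ,
        (∀ ℓ, (p ℓ) ^ 2 = -(((c ^ 2 + δ / τ) * lam ℓ : ℝ) : ℂ)
            - ((ω₀ / τ : ℝ) : ℂ) * (1 + e₃ ℓ) + e₄ ℓ) ∧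
        e₃ =O[atTop] (fun ℓ => (lam ℓ) ^ (-(1 : ℝ) / 2)) ∧
        e₄ =O[atTop] (fun ℓ => δ * (lam ℓ) ^ ((1 : ℝ) / 2))) := by
  have hP : JMGTParams τ c δ ω₀ := ⟨hτ, hc, hδ, hω₀⟩
  exact ⟨exists_pole_expansion hP hpos hlim hroot hbranch,
    isBigO_one_div_pole hP hpos hroot hbranch, exists_pole_sq_expansion hP hpos hlim hroot hbranch⟩

/-- asymptotics of the poles `p_ℓ`, i.e. of the roots of
`ϑ(o) + Θ(o)λ_ℓ = 0` with `ϑ(o) = τo³+o²+ω₀o`, `Θ(o) = c²(τo+1)+δo`, as `λ_ℓ → ∞`. -/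
theorem stmt3 (τ c δ ω₀ : ℝ) (hτ : 0 < τ) (hc : 0 < c) (hδ : 0 ≤ δ) (hω₀ : 0 ≤ ω₀)
    (lam : ℕ → ℝ) (hpos : ∀ ℓ, 0 < lam ℓ) (hlim : Tendsto lam atTop atTop)
    (p : ℕ → ℂ)
    (hroot : ∀ ℓ, (τ : ℂ) * (p ℓ) ^ 3 + (p ℓ) ^ 2 + (ω₀ : ℂ) * p ℓ
        + (((c ^ 2 : ℝ) : ℂ) * ((τ : ℂ) * p ℓ + 1) + (δ : ℂ) * p ℓ) * (lam ℓ : ℂ) = 0)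
    (hbranch : ∀ ℓ, 0 < (p ℓ).im) (hp0 : ∀ ℓ, p ℓ ≠ 0) :
    (∃ e₁ e₂ : ℕ → ℂ,
        (∀ ℓ, p ℓ = Complex.I * (Real.sqrt ((c ^ 2 + δ / τ) * lam ℓ + ω₀ / τ) : ℝ)
            + e₁ ℓ + e₂ ℓ) ∧
        e₁ =O[atTop] (fun ℓ => Real.sqrt ω₀ * (lam ℓ) ^ (-(1 : ℝ) / 4)) ∧
        e₂ =O[atTop] (fun ℓ => Real.sqrt δ * (lam ℓ) ^ ((1 : ℝ) / 4))) ∧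
    ((fun ℓ => 1 / p ℓ) =O[atTop] fun ℓ => (lam ℓ) ^ (-(1 : ℝ) / 2)) ∧
    (∃ e₃ e₄ : ℕ → ℂ,
        (∀ ℓ, (p ℓ) ^ 2 = -(((c ^ 2 + δ / τ) * lam ℓ : ℝ) : ℂ)
            - ((ω₀ / τ : ℝ) : ℂ) * (1 + e₃ ℓ) + e₄ ℓ) ∧
        e₃ =O[atTop] (fun ℓ => (lam ℓ) ^ (-(1 : ℝ) / 2)) ∧
        e₄ =O[atTop] (fun ℓ => δ * (lam ℓ) ^ ((1 : ℝ) / 2))) :=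
  stmt3_general τ c δ ω₀ hτ hc hδ hω₀ lam hpos hlim p hroot hbranch
end

section
/- Let τ > 0, c > 0, δ > 0 and let p = p(λ, τ, δ) with Re(p) < 0 be a root of τp³ + p² + (τc²+δ)λp + c²λ = 0 depending smoothly on (δ, τ). If δ ≤ 2τc², then ∂/∂τ(−Re(p)) < 0; i.e., increasing the relaxation time τ above the threshold δ/(2c²) decreases the distance of the pole from the imaginary axis. -/
/-!
Write the root as `p = r e^{iθ}` and put `f(τ, p) = τp³ + p² + (τc² + δ)λp + c²λ`. Differentiating
`f(τ, p(τ)) = 0` gives `p' · ∂ₚf = -(p³ + c²λp)`, hence `Re p' · |∂ₚf|² = -Re((p³ + c²λp) · conj ∂ₚf)`.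
For a non-real root `p = x + iy`, the imaginary part of `f = 0` divided by `y` reads
`τ(3x² - y²) + 2x + (τc² + δ)λ = 0`; using it, the right-hand side becomes
`-4xy²((2τc² - δ)λ - 4τ²x|p|²)`, which is positive when `x < 0` and `δ ≤ 2τc²`.
-/

open Complex ComplexConjugate

def dispersionCubic (c δ lam τ : ℝ) (p : ℂ) : ℂ :=
  τ * p ^ 3 + p ^ 2 + (τ * c ^ 2 + δ) * lam * p + c ^ 2 * lam

section DispersionCubic

variable {c δ lam : ℝ}

lemma dispersionCubic_root_re_im {τ : ℝ} {p : ℂ} (h : dispersionCubic c δ lam τ p = 0) :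
    τ * (p.re ^ 3 - 3 * p.re * p.im ^ 2) + (p.re ^ 2 - p.im ^ 2)
        + (τ * c ^ 2 + δ) * lam * p.re + c ^ 2 * lam = 0 ∧
      p.im * (τ * (3 * p.re ^ 2 - p.im ^ 2) + 2 * p.re + (τ * c ^ 2 + δ) * lam) = 0 := by
  have hre := congrArg re h
  have him := congrArg im h
  simp only [dispersionCubic, pow_succ, pow_zero, one_mul, add_re, add_im, mul_re, mul_im, ofReal_re,
    ofReal_im, zero_re, zero_im, zero_mul, mul_zero, sub_zero, add_zero] at hre him
  exact ⟨by linear_combination hre, by linear_combination him⟩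

lemma dispersionCubic_root_re_mul_conj_eq {τ : ℝ} {p : ℂ}
    (h : dispersionCubic c δ lam τ p = 0) (him : p.im ≠ 0) :
    ((p ^ 3 + c ^ 2 * lam * p) * conj (3 * τ * p ^ 2 + 2 * p + (τ * c ^ 2 + δ) * lam)).re
      = 4 * p.re * p.im ^ 2 * ((2 * τ * c ^ 2 - δ) * lam - 4 * τ ^ 2 * p.re * normSq p) := by
  obtain ⟨hre, hyim⟩ := dispersionCubic_root_re_im h
  have hdiv := (mul_eq_zero.mp hyim).resolve_left him
  set x := p.re
  set y := p.im
  simp only [pow_succ, pow_zero, one_mul, map_add, map_mul, conj_ofReal, conj_re, conj_im, re_ofNat,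
    im_ofNat, add_re, add_im, mul_re, mul_im, ofReal_re, ofReal_im, mul_zero, zero_mul, sub_zero,
    add_zero, neg_zero, mul_neg, neg_mul, neg_neg, normSq_apply]
  linear_combination
    x * (x ^ 2 - y ^ 2 + c ^ 2 * lam + 8 * τ * x * y ^ 2) * hdiv + 2 * y ^ 2 * (1 - 4 * τ * x) * hre

lemma dispersionCubic_root_re_mul_conj_neg {τ : ℝ} {p : ℂ}
    (h : dispersionCubic c δ lam τ p = 0) (hτ : 0 < τ)
    (hthreshold : 0 ≤ (2 * τ * c ^ 2 - δ) * lam) (hre : p.re < 0) (him : p.im ≠ 0) :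
    ((p ^ 3 + c ^ 2 * lam * p) * conj (3 * τ * p ^ 2 + 2 * p + (τ * c ^ 2 + δ) * lam)).re < 0 := by
  rw [dispersionCubic_root_re_mul_conj_eq h him]
  have hnormSq : 0 < normSq p := normSq_pos.mpr fun h0 => him (by simp [h0])
  have hy : 0 < p.im ^ 2 := by positivity
  have hfactor : 0 < (2 * τ * c ^ 2 - δ) * lam - 4 * τ ^ 2 * p.re * normSq p := by
    nlinarith [mul_pos (mul_pos (pow_pos hτ 2) (neg_pos.mpr hre)) hnormSq]
  nlinarith [mul_pos (mul_pos hy hfactor) (neg_pos.mpr hre)]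

lemma HasDerivAt.mul_dispersionCubic_deriv {p : ℝ → ℂ} {p' : ℂ} {τ₀ : ℝ}
    (hp : HasDerivAt p p' τ₀) (hroot : ∀ τ, dispersionCubic c δ lam τ (p τ) = 0) :
    p' * (3 * τ₀ * p τ₀ ^ 2 + 2 * p τ₀ + (τ₀ * c ^ 2 + δ) * lam)
      = -(p τ₀ ^ 3 + c ^ 2 * lam * p τ₀) := by
  have hτ : HasDerivAt (fun τ : ℝ => (τ : ℂ)) 1 τ₀ := (hasDerivAt_id τ₀).ofReal_comp
  have hF : HasDerivAt (fun τ => dispersionCubic c δ lam τ (p τ))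
      (p τ₀ ^ 3 + c ^ 2 * lam * p τ₀
        + p' * (3 * τ₀ * p τ₀ ^ 2 + 2 * p τ₀ + (τ₀ * c ^ 2 + δ) * lam)) τ₀ := by
    unfold dispersionCubic
    refine ((((hτ.fun_mul (hp.fun_pow 3)).add (hp.fun_pow 2)).add
      ((((hτ.mul_const ((c : ℂ) ^ 2)).add_const (δ : ℂ)).mul_const (lam : ℂ)).fun_mul hp)).add_const
      ((c : ℂ) ^ 2 * lam)).congr_deriv ?_
    push_cast
    ring
  have h0 : HasDerivAt (fun τ => dispersionCubic c δ lam τ (p τ)) 0 τ₀ := by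
    simpa [funext hroot] using hasDerivAt_const τ₀ (0 : ℂ)
  linear_combination -(h0.unique hF)

lemma HasDerivAt.re_pos_of_dispersionCubic {p : ℝ → ℂ} {p' : ℂ} {τ₀ : ℝ}
    (hp : HasDerivAt p p' τ₀) (hroot : ∀ τ, dispersionCubic c δ lam τ (p τ) = 0) (hτ₀ : 0 < τ₀)
    (hthreshold : 0 ≤ (2 * τ₀ * c ^ 2 - δ) * lam) (hre : (p τ₀).re < 0) (him : (p τ₀).im ≠ 0) :
    0 < p'.re := by
  set q := 3 * τ₀ * p τ₀ ^ 2 + 2 * p τ₀ + (τ₀ * c ^ 2 + δ) * lam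
  have hmul : p'.re * normSq q = -((p τ₀ ^ 3 + c ^ 2 * lam * p τ₀) * conj q).re := by
    rw [← re_mul_ofReal, ← mul_conj, ← mul_assoc, hp.mul_dispersionCubic_deriv hroot, neg_mul,
      neg_re]
  refine pos_of_mul_pos_left ?_ (normSq_nonneg q)
  rw [hmul, neg_pos]
  exact dispersionCubic_root_re_mul_conj_neg (hroot τ₀) hτ₀ hthreshold hre him

end DispersionCubic

lemma ofReal_mul_exp_mul_I_pow_re (r θ : ℝ) (n : ℕ) :
    (((r : ℂ) * exp (θ * I)) ^ n).re = r ^ n * Real.cos (n * θ) := by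
  rw [mul_pow, ← exp_nat_mul, ← ofReal_pow, ← mul_assoc, ← ofReal_natCast, ← ofReal_mul,
    re_ofReal_mul, exp_ofReal_mul_I_re]

lemma ofReal_mul_exp_mul_I_pow_im (r θ : ℝ) (n : ℕ) :
    (((r : ℂ) * exp (θ * I)) ^ n).im = r ^ n * Real.sin (n * θ) := by
  rw [mul_pow, ← exp_nat_mul, ← ofReal_pow, ← mul_assoc, ← ofReal_natCast, ← ofReal_mul,
    im_ofReal_mul, exp_ofReal_mul_I_im]

lemma dispersionCubic_ofReal_mul_exp_mul_I {c δ lam τ r θ : ℝ}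
    (hre : τ * r ^ 3 * Real.cos (3 * θ) + r ^ 2 * Real.cos (2 * θ)
        + (τ * c ^ 2 + δ) * lam * r * Real.cos θ + c ^ 2 * lam = 0)
    (him : τ * r ^ 3 * Real.sin (3 * θ) + r ^ 2 * Real.sin (2 * θ)
        + (τ * c ^ 2 + δ) * lam * r * Real.sin θ = 0) :
    dispersionCubic c δ lam τ (r * exp (θ * I)) = 0 := by
  apply Complex.ext <;>
    simp only [dispersionCubic, ← ofReal_pow, add_re, add_im, mul_re, mul_im, ofReal_re, ofReal_im,
      zero_re, zero_im, ofReal_mul_exp_mul_I_pow_re, ofReal_mul_exp_mul_I_pow_im, Nat.cast_ofNat,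
      exp_ofReal_mul_I_re, exp_ofReal_mul_I_im]
  · linear_combination hre
  · linear_combination him

theorem stmt10_general (c lam δ : ℝ) (hlam : 0 < lam)
    (τ0 : ℝ) (hτ0 : 0 < τ0)
    (r θ : ℝ → ℝ)  -- polar coordinates of the root as functions of τ
    (hr : DifferentiableAt ℝ r τ0) (hθ : DifferentiableAt ℝ θ τ0)
    (hRe : r τ0 * Real.cos (θ τ0) < 0)  -- Re p < 0
    (hsin : Real.sin (θ τ0) ≠ 0)
    -- the polar-coordinate form of `τp³ + p² + (τc²+δ)λp + c²λ = 0` holds for all τ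
    (heqRe : ∀ τ, τ * (r τ) ^ 3 * Real.cos (3 * θ τ) + (r τ) ^ 2 * Real.cos (2 * θ τ)
        + (τ * c ^ 2 + δ) * lam * r τ * Real.cos (θ τ) + c ^ 2 * lam = 0)
    (heqIm : ∀ τ, τ * (r τ) ^ 3 * Real.sin (3 * θ τ) + (r τ) ^ 2 * Real.sin (2 * θ τ)
        + (τ * c ^ 2 + δ) * lam * r τ * Real.sin (θ τ) = 0)
    (hthreshold : δ ≤ 2 * τ0 * c ^ 2) :
    deriv (fun τ => -(r τ * Real.cos (θ τ))) τ0 < 0 := by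
  set p : ℝ → ℂ := fun τ => r τ * exp (θ τ * I)
  obtain ⟨p', hp⟩ : ∃ p', HasDerivAt p p' τ0 :=
    ⟨_, hr.hasDerivAt.ofReal_comp.fun_mul (hθ.hasDerivAt.ofReal_comp.mul_const I).cexp⟩
  have hp_re : ∀ τ, (p τ).re = r τ * Real.cos (θ τ) := fun τ => by
    simp only [p, re_ofReal_mul, exp_ofReal_mul_I_re]
  have him : (p τ0).im ≠ 0 := by
    simp only [p, im_ofReal_mul, exp_ofReal_mul_I_im]
    exact mul_ne_zero (left_ne_zero_of_mul hRe.ne) hsin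
  have hpos := hp.re_pos_of_dispersionCubic
    (fun τ => dispersionCubic_ofReal_mul_exp_mul_I (heqRe τ) (heqIm τ)) hτ0
    (mul_nonneg (by linarith) hlam.le) ((hp_re τ0).trans_lt hRe) him
  have hderiv : HasDerivAt (fun τ => -(r τ * Real.cos (θ τ))) (-p'.re) τ0 := by
    simp only [← hp_re]
    exact (reCLM.hasFDerivAt.comp_hasDerivAt τ0 hp).fun_neg
  rw [hderiv.deriv]
  linarith

/-- increasing the relaxation time `τ` above the threshold `δ/(2c²)`
decreases the distance of the pole from the imaginary axis. -/
theorem stmt10 (c lam δ : ℝ) (hc : 0 < c) (hlam : 0 < lam) (hδ : 0 < δ)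
    (τ0 : ℝ) (hτ0 : 0 < τ0)
    (r θ : ℝ → ℝ)  -- polar coordinates of the root as functions of τ
    (hr : DifferentiableAt ℝ r τ0) (hθ : DifferentiableAt ℝ θ τ0)
    (hrpos : 0 < r τ0)
    (hRe : r τ0 * Real.cos (θ τ0) < 0)  -- Re p < 0
    (hsin : Real.sin (θ τ0) ≠ 0)
    -- the polar-coordinate form of `τp³ + p² + (τc²+δ)λp + c²λ = 0` holds for all τ
    (heqRe : ∀ τ, τ * (r τ) ^ 3 * Real.cos (3 * θ τ) + (r τ) ^ 2 * Real.cos (2 * θ τ)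
        + (τ * c ^ 2 + δ) * lam * r τ * Real.cos (θ τ) + c ^ 2 * lam = 0)
    (heqIm : ∀ τ, τ * (r τ) ^ 3 * Real.sin (3 * θ τ) + (r τ) ^ 2 * Real.sin (2 * θ τ)
        + (τ * c ^ 2 + δ) * lam * r τ * Real.sin (θ τ) = 0)
    -- nondegeneracy of the Jacobian of the implicit function theorem
    (hJac : (3 * τ0 * (r τ0) ^ 2 * Real.cos (3 * θ τ0) + 2 * r τ0 * Real.cos (2 * θ τ0)
          + (τ0 * c ^ 2 + δ) * lam * Real.cos (θ τ0)) ^ 2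
        + (3 * τ0 * (r τ0) ^ 2 * Real.sin (3 * θ τ0) + 2 * r τ0 * Real.sin (2 * θ τ0)
          + (τ0 * c ^ 2 + δ) * lam * Real.sin (θ τ0)) ^ 2 ≠ 0)
    (hthreshold : δ ≤ 2 * τ0 * c ^ 2) :
    deriv (fun τ => -(r τ * Real.cos (θ τ))) τ0 < 0 :=
  stmt10_general c lam δ hlam τ0 hτ0 r θ hr hθ hRe hsin heqRe heqIm hthreshold
end
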